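/- If P is strictly stochastically transitive and its pairwise probabilities satisfy the noise condition min_{i<j} |p_{i,j} - 1/2| ≥ H > 0, and Q is any distribution on S_n whose pairwise probabilities satisfy |q_{i,j} - p_{i,j}| < H for all i < j, then Q is strictly stochastically transitive and its unique Kemeny median equals that of P. -/
import Mathlib


open Finset

/-- The set of ordered pairs (i,j) with i < j. -/
def pairs (n : ℕ) : Finset (Fin n × Fin n) :=
  Finset.univ.filter fun p => p.1 < p.2

/-- Kendall tau distance between two permutations. -/
noncomputable def dtau {n : ℕ} (σ σ' : Equiv.Perm (Fin n)) : ℝ :=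
  ∑ p ∈ pairs n,
    if (((σ p.1 : ℕ) : ℤ) - ((σ p.2 : ℕ) : ℤ)) * (((σ' p.1 : ℕ) : ℤ) - ((σ' p.2 : ℕ) : ℤ)) < 0
    then 1 else 0

/-- Expected Kendall tau distance L_P(σ) = E_{Σ∼P}[d_τ(Σ,σ)]. -/
noncomputable def L {n : ℕ} (P : Equiv.Perm (Fin n) → ℝ) (σ : Equiv.Perm (Fin n)) : ℝ :=
  ∑ τ : Equiv.Perm (Fin n), P τ * dtau τ σ

/-- Pairwise probability p_{i,j} = P{Σ(i) < Σ(j)}. -/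
noncomputable def pp {n : ℕ} (P : Equiv.Perm (Fin n) → ℝ) (i j : Fin n) : ℝ :=
  ∑ τ : Equiv.Perm (Fin n), P τ * (if τ i < τ j then 1 else 0)

/-- P is a probability distribution on S_n. -/
def IsProb {n : ℕ} (P : Equiv.Perm (Fin n) → ℝ) : Prop :=
  (∀ τ, 0 ≤ P τ) ∧ ∑ τ : Equiv.Perm (Fin n), P τ = 1

/-- σ is a Kemeny median of P. -/
def IsMedian {n : ℕ} (P : Equiv.Perm (Fin n) → ℝ) (σ : Equiv.Perm (Fin n)) : Prop :=
  ∀ τ, L P σ ≤ L P τ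

/-- L*_P = min_σ L_P(σ). -/
noncomputable def Lstar {n : ℕ} (P : Equiv.Perm (Fin n) → ℝ) : ℝ :=
  ⨅ σ : Equiv.Perm (Fin n), L P σ

/-- Stochastic transitivity. -/
def StochTrans {n : ℕ} (P : Equiv.Perm (Fin n) → ℝ) : Prop :=
  ∀ i j k : Fin n, 1/2 ≤ pp P i j → 1/2 ≤ pp P j k → 1/2 ≤ pp P i k

/-- Strict stochastic transitivity. -/
def StrictStochTrans {n : ℕ} (P : Equiv.Perm (Fin n) → ℝ) : Prop :=
  StochTrans P ∧ ∀ i j : Fin n, i < j → pp P i j ≠ 1/2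



lemma pp_self {n : ℕ} (P : Equiv.Perm (Fin n) → ℝ) (i : Fin n) : pp P i i = 0 := by
  simp [pp]

lemma pp_add {n : ℕ} {P : Equiv.Perm (Fin n) → ℝ} (hP : IsProb P) {i j : Fin n} (h : i ≠ j) :
    pp P i j + pp P j i = 1 := by
  unfold pp
  rw [← Finset.sum_add_distrib]
  have key : ∀ τ ∈ (univ : Finset (Equiv.Perm (Fin n))),
      P τ * (if τ i < τ j then (1:ℝ) else 0) + P τ * (if τ j < τ i then (1:ℝ) else 0)
        = P τ := by
    intro τ _
    have hne : τ i ≠ τ j := fun hh => h (τ.injective hh)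
    rcases hne.lt_or_gt with hlt | hlt
    · simp [hlt, hlt.asymm]
    · simp [hlt, hlt.asymm]
  rw [Finset.sum_congr rfl key, hP.2]

lemma pp_ne_half {n : ℕ} {P : Equiv.Perm (Fin n) → ℝ} (hP : IsProb P)
    (hT : StrictStochTrans P) {i j : Fin n} (h : i ≠ j) : pp P i j ≠ 1/2 := by
  rcases h.lt_or_gt with hlt | hlt
  · exact hT.2 i j hlt
  · have h2 := hT.2 j i hlt
    have hs := pp_add hP h
    intro hh; apply h2; linarith

lemma beats_total {n : ℕ} {P : Equiv.Perm (Fin n) → ℝ} (hP : IsProb P)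
    (hT : StrictStochTrans P) {i j : Fin n} (h : i ≠ j) :
    1/2 < pp P i j ∨ 1/2 < pp P j i := by
  have hs := pp_add hP h
  have h1 := pp_ne_half hP hT h
  rcases lt_or_gt_of_ne h1 with hlt | hlt
  · right; linarith
  · left; exact hlt

lemma beats_trans {n : ℕ} {P : Equiv.Perm (Fin n) → ℝ} (hP : IsProb P)
    (hT : StrictStochTrans P) {i j k : Fin n}
    (h1 : 1/2 < pp P i j) (h2 : 1/2 < pp P j k) : 1/2 < pp P i k := by
  have hij : i ≠ j := by rintro rfl; rw [pp_self] at h1; linarith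
  have hik : i ≠ k := by
    rintro rfl
    have hs := pp_add hP hij
    linarith
  exact lt_of_le_of_ne (hT.1 i j k h1.le h2.le) (Ne.symm (pp_ne_half hP hT hik))

/-- Existence of a "good" permutation for a strictly stochastically transitive P. -/
lemma exists_good {n : ℕ} {P : Equiv.Perm (Fin n) → ℝ} (hP : IsProb P)
    (hT : StrictStochTrans P) :
    ∃ σ : Equiv.Perm (Fin n), ∀ i j : Fin n, i < j → (σ i < σ j ↔ 1/2 < pp P i j) := by
  classical
  have hrank : ∀ i : Fin n, (univ.filter fun j => 1/2 < pp P j i).card < n := by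
    intro i
    have hsub : (univ.filter fun j => 1/2 < pp P j i) ⊆ univ.erase i := by
      intro k hk
      rw [Finset.mem_filter] at hk
      refine Finset.mem_erase.mpr ⟨?_, Finset.mem_univ _⟩
      rintro rfl
      rw [pp_self] at hk
      linarith [hk.2]
    calc (univ.filter fun j => 1/2 < pp P j i).card
        ≤ (univ.erase i).card := Finset.card_le_card hsub
      _ < univ.card := Finset.card_erase_lt_of_mem (Finset.mem_univ i)
      _ = n := by simp
  let f : Fin n → Fin n := fun i => ⟨_, hrank i⟩
  have mono : ∀ i j : Fin n, 1/2 < pp P i j → f i < f j := by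
    intro i j hb
    have hss : (univ.filter fun k => 1/2 < pp P k i) ⊂ (univ.filter fun k => 1/2 < pp P k j) := by
      constructor
      · intro k hk
        rw [Finset.mem_filter] at hk ⊢
        exact ⟨Finset.mem_univ _, beats_trans hP hT hk.2 hb⟩
      · intro hsub
        have hi : i ∈ (univ.filter fun k => 1/2 < pp P k j) :=
          Finset.mem_filter.mpr ⟨Finset.mem_univ _, hb⟩
        have hi2 := hsub hi
        rw [Finset.mem_filter] at hi2
        rw [pp_self] at hi2
        linarith [hi2.2]
    exact Fin.mk_lt_mk.mpr (Finset.card_lt_card hss)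
  have inj : Function.Injective f := by
    intro i j hfeq
    by_contra hne
    rcases beats_total hP hT hne with hb | hb
    · exact absurd hfeq (ne_of_lt (mono _ _ hb))
    · exact absurd hfeq.symm (ne_of_lt (mono _ _ hb))
  let σ := Equiv.ofBijective f (Finite.injective_iff_bijective.mp inj)
  refine ⟨σ, fun i j hij => ?_⟩
  have hσ : ∀ k, σ k = f k := fun k => rfl
  constructor
  · intro hlt
    by_contra hnb
    have hne : i ≠ j := ne_of_lt hij
    rcases beats_total hP hT hne with hb | hb
    · exact hnb hb
    · have := mono _ _ hb
      rw [← hσ, ← hσ] at this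
      exact absurd hlt (asymm this)
  · intro hb
    have := mono _ _ hb
    rwa [← hσ, ← hσ] at this

lemma L_eq {n : ℕ} {P : Equiv.Perm (Fin n) → ℝ} (hP : IsProb P) (σ : Equiv.Perm (Fin n)) :
    L P σ = ∑ p ∈ pairs n,
      (if σ p.1 < σ p.2 then 1 - pp P p.1 p.2 else pp P p.1 p.2) := by
  unfold L dtau
  simp only [Finset.mul_sum]
  rw [Finset.sum_comm]
  refine Finset.sum_congr rfl fun p hp => ?_
  obtain ⟨i, j⟩ := p
  have hij : i < j := (Finset.mem_filter.mp hp).2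
  have hijne : i ≠ j := ne_of_lt hij
  have hσ : σ i ≠ σ j := fun h => hijne (σ.injective h)
  have key : ∀ τ : Equiv.Perm (Fin n),
      (if (((τ i : ℕ):ℤ) - ((τ j : ℕ):ℤ)) * (((σ i : ℕ):ℤ) - ((σ j : ℕ):ℤ)) < 0 then (1:ℝ) else 0)
      = if σ i < σ j then (if τ j < τ i then (1:ℝ) else 0)
        else (if τ i < τ j then (1:ℝ) else 0) := by
    intro τ
    have hτ : τ i ≠ τ j := fun h => hijne (τ.injective h)
    rcases hτ.lt_or_gt with h1 | h1 <;> rcases hσ.lt_or_gt with h2 | h2 <;>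
      [skip; skip; skip; skip]
    · have a : ((τ i : ℕ):ℤ) < ((τ j : ℕ):ℤ) := by exact_mod_cast Fin.lt_def.mp h1
      have b : ((σ i : ℕ):ℤ) < ((σ j : ℕ):ℤ) := by exact_mod_cast Fin.lt_def.mp h2
      rw [if_neg (not_lt.mpr (le_of_lt (mul_pos_of_neg_of_neg (by linarith) (by linarith)))),
        if_pos h2, if_neg (asymm h1)]
    · have a : ((τ i : ℕ):ℤ) < ((τ j : ℕ):ℤ) := by exact_mod_cast Fin.lt_def.mp h1
      have b : ((σ j : ℕ):ℤ) < ((σ i : ℕ):ℤ) := by exact_mod_cast Fin.lt_def.mp h2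
      rw [if_pos (mul_neg_of_neg_of_pos (by linarith) (by linarith)),
        if_neg (asymm h2), if_pos h1]
    · have a : ((τ j : ℕ):ℤ) < ((τ i : ℕ):ℤ) := by exact_mod_cast Fin.lt_def.mp h1
      have b : ((σ i : ℕ):ℤ) < ((σ j : ℕ):ℤ) := by exact_mod_cast Fin.lt_def.mp h2
      rw [if_pos (mul_neg_of_pos_of_neg (by linarith) (by linarith)),
        if_pos h2, if_pos h1]
    · have a : ((τ j : ℕ):ℤ) < ((τ i : ℕ):ℤ) := by exact_mod_cast Fin.lt_def.mp h1
      have b : ((σ j : ℕ):ℤ) < ((σ i : ℕ):ℤ) := by exact_mod_cast Fin.lt_def.mp h2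
      rw [if_neg (not_lt.mpr (le_of_lt (mul_pos (by linarith) (by linarith)))),
        if_neg (asymm h2), if_neg (asymm h1)]
  simp only [key]
  have hadd := pp_add hP hijne
  by_cases h2 : σ i < σ j
  · simp only [if_pos h2]
    have : (∑ τ : Equiv.Perm (Fin n), P τ * (if τ j < τ i then (1:ℝ) else 0)) = pp P j i := rfl
    rw [this]; linarith
  · simp only [if_neg h2]
    rfl

/-- σ achieves the pairwise minimum everywhere. -/
def Good {n : ℕ} (P : Equiv.Perm (Fin n) → ℝ) (σ : Equiv.Perm (Fin n)) : Prop :=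
  ∀ i j : Fin n, i < j → (σ i < σ j ↔ 1/2 < pp P i j)

noncomputable def Mval {n : ℕ} (P : Equiv.Perm (Fin n) → ℝ) : ℝ :=
  ∑ p ∈ pairs n, min (pp P p.1 p.2) (1 - pp P p.1 p.2)

lemma Mval_le_L {n : ℕ} {P : Equiv.Perm (Fin n) → ℝ} (hP : IsProb P) (σ : Equiv.Perm (Fin n)) :
    Mval P ≤ L P σ := by
  rw [L_eq hP σ]
  refine Finset.sum_le_sum fun p hp => ?_
  by_cases h : σ p.1 < σ p.2
  · rw [if_pos h]; exact min_le_right _ _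
  · rw [if_neg h]; exact min_le_left _ _

lemma L_of_good {n : ℕ} {P : Equiv.Perm (Fin n) → ℝ} (hP : IsProb P)
    (hT : StrictStochTrans P) {σ : Equiv.Perm (Fin n)} (hg : Good P σ) :
    L P σ = Mval P := by
  rw [L_eq hP σ]
  refine Finset.sum_congr rfl fun p hp => ?_
  have hij : p.1 < p.2 := (Finset.mem_filter.mp hp).2
  by_cases h : σ p.1 < σ p.2
  · rw [if_pos h, eq_comm]
    have hb := (hg p.1 p.2 hij).mp h
    exact min_eq_right (by linarith)
  · rw [if_neg h, eq_comm]
    have hb : ¬ (1/2 < pp P p.1 p.2) := fun hc => h ((hg p.1 p.2 hij).mpr hc)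
    push_neg at hb
    have hne := hT.2 p.1 p.2 hij
    exact min_eq_left (by have := lt_of_le_of_ne hb hne; linarith)

lemma Mval_lt_L {n : ℕ} {P : Equiv.Perm (Fin n) → ℝ} (hP : IsProb P)
    (hT : StrictStochTrans P) {σ : Equiv.Perm (Fin n)} (hg : ¬ Good P σ) :
    Mval P < L P σ := by
  rw [L_eq hP σ]
  unfold Good at hg
  push_neg at hg
  obtain ⟨i, j, hij, hiff⟩ := hg
  have hmem : (i, j) ∈ pairs n := Finset.mem_filter.mpr ⟨Finset.mem_univ _, hij⟩
  refine Finset.sum_lt_sum (fun p hp => ?_) ⟨(i, j), hmem, ?_⟩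
  · by_cases h : σ p.1 < σ p.2
    · rw [if_pos h]; exact min_le_right _ _
    · rw [if_neg h]; exact min_le_left _ _
  · have hne := hT.2 i j hij
    rcases hiff with ⟨h, hb⟩ | ⟨h, hb⟩
    · rw [if_pos h]
      have hlt : pp P i j < 1/2 := lt_of_le_of_ne hb hne
      calc min (pp P i j) (1 - pp P i j) ≤ pp P i j := min_le_left _ _
        _ < 1 - pp P i j := by linarith
    · rw [if_neg (not_lt.mpr h)]
      calc min (pp P i j) (1 - pp P i j) ≤ 1 - pp P i j := min_le_right _ _
        _ < pp P i j := by linarith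

lemma median_iff_good {n : ℕ} {P : Equiv.Perm (Fin n) → ℝ} (hP : IsProb P)
    (hT : StrictStochTrans P) (σ : Equiv.Perm (Fin n)) :
    IsMedian P σ ↔ Good P σ := by
  obtain ⟨σ₀, hσ₀⟩ := exists_good hP hT
  have hg0 : Good P σ₀ := hσ₀
  constructor
  · intro hm
    by_contra hg
    have h1 := Mval_lt_L hP hT hg
    have h2 := hm σ₀
    rw [L_of_good hP hT hg0] at h2
    linarith
  · intro hg τ
    rw [L_of_good hP hT hg]
    exact Mval_le_L hP τ

theorem stmt_19 {n : ℕ} (P Q : Equiv.Perm (Fin n) → ℝ)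
    (hP : IsProb P) (hQ : IsProb Q)
    (hT : StrictStochTrans P)
    (H : ℝ) (hHpos : 0 < H)
    (hH : ∀ i j : Fin n, i < j → H ≤ |pp P i j - 1/2|)
    (hclose : ∀ i j : Fin n, i < j → |pp Q i j - pp P i j| < H) :
    StrictStochTrans Q ∧ ∀ σ : Equiv.Perm (Fin n), (IsMedian Q σ ↔ IsMedian P σ) := by
  -- sign transfer for i < j
  have sign : ∀ i j : Fin n, i < j →
      ((1/2 < pp Q i j ↔ 1/2 < pp P i j) ∧ pp Q i j ≠ 1/2) := by
    intro i j hij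
    have h1 := hH i j hij
    have h2 := hclose i j hij
    have h3 := hT.2 i j hij
    rw [abs_sub_lt_iff] at h2
    rcases lt_or_gt_of_ne h3 with hlt | hgt
    · rw [abs_of_nonpos (by linarith)] at h1
      constructor
      · constructor
        · intro h; linarith
        · intro h; linarith
      · intro h; linarith
    · rw [abs_of_nonneg (by linarith)] at h1
      constructor
      · constructor
        · intro _; exact hgt
        · intro _; linarith
      · intro h; linarith
  -- sign transfer for all i ≠ j
  have sign' : ∀ i j : Fin n, i ≠ j → (1/2 < pp Q i j ↔ 1/2 < pp P i j) := by
    intro i j hne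
    rcases hne.lt_or_gt with hlt | hlt
    · exact (sign i j hlt).1
    · have hs := (sign j i hlt).1
      have hsP := pp_add hP hne
      have hsQ := pp_add hQ hne
      have hneQ := (sign j i hlt).2
      have hneP := hT.2 j i hlt
      constructor
      · intro h
        by_contra hc; push_neg at hc
        have : 1/2 < pp P j i := lt_of_le_of_ne (by linarith) (Ne.symm hneP)
        have := hs.mpr this
        linarith
      · intro h
        by_contra hc; push_neg at hc
        have : 1/2 < pp Q j i := lt_of_le_of_ne (by linarith) (Ne.symm hneQ)
        have := hs.mp this
        linarith
  have hQne : ∀ i j : Fin n, i ≠ j → pp Q i j ≠ 1/2 := by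
    intro i j hne
    rcases hne.lt_or_gt with hlt | hlt
    · exact (sign i j hlt).2
    · have := (sign j i hlt).2
      have hsQ := pp_add hQ hne
      intro h; apply this; linarith
  have hTQ : StrictStochTrans Q := by
    constructor
    · intro i j k h1 h2
      have hij : i ≠ j := by
        rintro rfl; rw [pp_self] at h1; linarith
      have hjk : j ≠ k := by
        rintro rfl; rw [pp_self] at h2; linarith
      have h1' : 1/2 < pp Q i j := lt_of_le_of_ne h1 (Ne.symm (hQne i j hij))
      have h2' : 1/2 < pp Q j k := lt_of_le_of_ne h2 (Ne.symm (hQne j k hjk))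
      have hp1 := (sign' i j hij).mp h1'
      have hp2 := (sign' j k hjk).mp h2'
      have hik : i ≠ k := by
        rintro rfl
        have := pp_add hP hij
        linarith
      have hp3 := beats_trans hP hT hp1 hp2
      exact ((sign' i k hik).mpr hp3).le
    · intro i j hij
      exact (sign i j hij).2
  refine ⟨hTQ, fun σ => ?_⟩
  rw [median_iff_good hQ hTQ, median_iff_good hP hT]
  unfold Good
  constructor
  · intro hg i j hij
    rw [← (sign i j hij).1]
    exact hg i j hij
  · intro hg i j hij
    rw [(sign i j hij).1]
    exact hg i j hij
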